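/- Let c : ℝ → ℝ be continuously differentiable. Let U, V : ℝ × ℝ → ℝ (functions of (X,T)) be twice continuously differentiable and satisfy, for all (X,T), the system V_X·U_T − V_T·U_X − 1 = 0 and V_T + c(T)²·U_X − c(T)²·V_X = 0, and suppose U_T(X,T) − c(T)²·U_X(X,T) ≠ 0 for all (X,T). Then U satisfies, at every point (X,T), the scalar PDE U_TT + c(T)²·( c(T)²·U_XX − U_XX·U_T² − U_TT·U_X² − 2·U_TX + 2·U_TX·U_T·U_X ) − 2·c(T)·c'(T)·( U_X − U_X²·U_T ) = 0, where subscripts denote partial derivatives. -/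

import Mathlib

/-!
Eliminating `V_T` and `V_X` between the two equations gives, with `D = U_T - c² U_X`,
`V_X · D = 1 - c² U_X²` and `V_T · D = c² (1 - U_X U_T)`. Differentiate the first relation in `T`
and the second in `X`; since `V_XT = V_TX`, multiplying the difference by `D` and substituting the
two relations back removes `V` altogether, and what remains is exactly the stated PDE for `U`.
-/

noncomputable def partialFst (F : ℝ × ℝ → ℝ) : ℝ × ℝ → ℝ :=
  fun p => deriv (fun x => F (x, p.2)) p.1

noncomputable def partialSnd (F : ℝ × ℝ → ℝ) : ℝ × ℝ → ℝ :=
  fun p => deriv (fun t => F (p.1, t)) p.2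

local notation "∂₁" => partialFst
local notation "∂₂" => partialSnd

section

variable {F : ℝ × ℝ → ℝ}

theorem DifferentiableAt.hasDerivAt_partialFst {x t : ℝ} (hF : DifferentiableAt ℝ F (x, t)) :
    HasDerivAt (fun y => F (y, t)) (∂₁ F (x, t)) x :=
  (hF.comp x (differentiableAt_id.prodMk (differentiableAt_const t))).hasDerivAt

theorem DifferentiableAt.hasDerivAt_partialSnd {x t : ℝ} (hF : DifferentiableAt ℝ F (x, t)) :
    HasDerivAt (fun s => F (x, s)) (∂₂ F (x, t)) t :=
  (hF.comp t ((differentiableAt_const x).prodMk differentiableAt_id)).hasDerivAt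

theorem HasFDerivAt.partialFst_eq {F' : ℝ × ℝ →L[ℝ] ℝ} {p : ℝ × ℝ} (hF : HasFDerivAt F F' p) :
    ∂₁ F p = F' (1, 0) :=
  (hF.comp_hasDerivAt p.1 ((hasDerivAt_id _).prodMk (hasDerivAt_const _ _))).deriv

theorem HasFDerivAt.partialSnd_eq {F' : ℝ × ℝ →L[ℝ] ℝ} {p : ℝ × ℝ} (hF : HasFDerivAt F F' p) :
    ∂₂ F p = F' (0, 1) :=
  (hF.comp_hasDerivAt p.2 ((hasDerivAt_const _ _).prodMk (hasDerivAt_id _))).deriv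

theorem Differentiable.partialFst_eq_fderiv (hF : Differentiable ℝ F) :
    ∂₁ F = fun p => fderiv ℝ F p (1, 0) :=
  funext fun p => (hF p).hasFDerivAt.partialFst_eq

theorem Differentiable.partialSnd_eq_fderiv (hF : Differentiable ℝ F) :
    ∂₂ F = fun p => fderiv ℝ F p (0, 1) :=
  funext fun p => (hF p).hasFDerivAt.partialSnd_eq

theorem ContDiff.partialFst {m n : WithTop ℕ∞} (hF : ContDiff ℝ n F) (hmn : m + 1 ≤ n) :
    ContDiff ℝ m (∂₁ F) := by
  rw [((hF.of_le (le_add_self.trans hmn)).differentiable one_ne_zero).partialFst_eq_fderiv]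
  exact (hF.fderiv_right hmn).clm_apply contDiff_const

theorem ContDiff.partialSnd {m n : WithTop ℕ∞} (hF : ContDiff ℝ n F) (hmn : m + 1 ≤ n) :
    ContDiff ℝ m (∂₂ F) := by
  rw [((hF.of_le (le_add_self.trans hmn)).differentiable one_ne_zero).partialSnd_eq_fderiv]
  exact (hF.fderiv_right hmn).clm_apply contDiff_const

theorem partialFst_partialSnd (hF : ContDiff ℝ 2 F) : ∂₁ (∂₂ F) = ∂₂ (∂₁ F) := by
  have hFd : Differentiable ℝ F := hF.differentiable two_ne_zero
  have hF' : Differentiable ℝ (fderiv ℝ F) :=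
    (hF.fderiv_right (m := 1) le_rfl).differentiable one_ne_zero
  ext p
  have hF'' (v : ℝ × ℝ) := (hF' p).hasFDerivAt.clm_apply (hasFDerivAt_const v p)
  rw [hFd.partialFst_eq_fderiv, hFd.partialSnd_eq_fderiv, (hF'' _).partialFst_eq,
    (hF'' _).partialSnd_eq]
  simpa using hF.contDiffAt.isSymmSndFDerivAt (by simp) (1, 0) (0, 1)

end

theorem HasDerivAt.mul_eq_of_mul_eq {f g h : ℝ → ℝ} {f' g' h' x : ℝ} (hfg : ∀ y, f y * g y = h y)
    (hf : HasDerivAt f f' x) (hg : HasDerivAt g g' x) (hh : HasDerivAt h h' x) :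
    f' * g x + f x * g' = h' :=
  (hf.fun_mul hg).unique (funext hfg ▸ hh)

theorem compatibility_of_partial_mul_eq {V D N₁ N₂ : ℝ × ℝ → ℝ} (hV : ContDiff ℝ 2 V)
    (h₁ : ∀ p, ∂₁ V p * D p = N₁ p) (h₂ : ∀ p, ∂₂ V p * D p = N₂ p) {x t D₁ D₂ N₁' N₂' : ℝ}
    (hD₁ : HasDerivAt (fun y => D (y, t)) D₁ x) (hD₂ : HasDerivAt (fun s => D (x, s)) D₂ t)
    (hN₁ : HasDerivAt (fun s => N₁ (x, s)) N₁' t) (hN₂ : HasDerivAt (fun y => N₂ (y, t)) N₂' x) :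
    N₁ (x, t) * D₂ - N₂ (x, t) * D₁ = D (x, t) * (N₁' - N₂') := by
  have hV₁ : Differentiable ℝ (∂₁ V) := (hV.partialFst (m := 1) le_rfl).differentiable one_ne_zero
  have hV₂ : Differentiable ℝ (∂₂ V) := (hV.partialSnd (m := 1) le_rfl).differentiable one_ne_zero
  have eT := HasDerivAt.mul_eq_of_mul_eq (fun s => h₁ (x, s))
    (hV₁ (x, t)).hasDerivAt_partialSnd hD₂ hN₁
  have eX := HasDerivAt.mul_eq_of_mul_eq (fun y => h₂ (y, t))
    (hV₂ (x, t)).hasDerivAt_partialFst hD₁ hN₂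
  rw [partialFst_partialSnd hV] at eX
  linear_combination D (x, t) * eT - D (x, t) * eX - D₂ * h₁ (x, t) + D₁ * h₂ (x, t)

theorem stmt_10_general (c : ℝ → ℝ) (hc : ContDiff ℝ 1 c)
    (U V : ℝ × ℝ → ℝ) (hU : ContDiff ℝ 2 U) (hV : ContDiff ℝ 2 V)
    (h1 : ∀ X T : ℝ, deriv (fun Y => V (Y, T)) X * deriv (fun S => U (X, S)) T
      - deriv (fun S => V (X, S)) T * deriv (fun Y => U (Y, T)) X - 1 = 0)
    (h2 : ∀ X T : ℝ, deriv (fun S => V (X, S)) T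
      + (c T) ^ 2 * deriv (fun Y => U (Y, T)) X
      - (c T) ^ 2 * deriv (fun Y => V (Y, T)) X = 0) :
    ∀ X T : ℝ,
      deriv (deriv (fun S => U (X, S))) T
      + (c T) ^ 2 * ((c T) ^ 2 * deriv (deriv (fun Y => U (Y, T))) X
          - deriv (deriv (fun Y => U (Y, T))) X * (deriv (fun S => U (X, S)) T) ^ 2
          - deriv (deriv (fun S => U (X, S))) T * (deriv (fun Y => U (Y, T)) X) ^ 2
          - 2 * deriv (fun S => deriv (fun Y => U (Y, S)) X) T
          + 2 * deriv (fun S => deriv (fun Y => U (Y, S)) X) T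
              * deriv (fun S => U (X, S)) T * deriv (fun Y => U (Y, T)) X)
      - 2 * c T * deriv c T * (deriv (fun Y => U (Y, T)) X
          - (deriv (fun Y => U (Y, T)) X) ^ 2 * deriv (fun S => U (X, S)) T) = 0 := by
  intro X T
  have hU₁ : Differentiable ℝ (∂₁ U) := (hU.partialFst (m := 1) le_rfl).differentiable one_ne_zero
  have hU₂ : Differentiable ℝ (∂₂ U) := (hU.partialSnd (m := 1) le_rfl).differentiable one_ne_zero
  have e₁ (p : ℝ × ℝ) : ∂₁ V p * ∂₂ U p - ∂₂ V p * ∂₁ U p - 1 = 0 := h1 p.1 p.2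
  have e₂ (p : ℝ × ℝ) : ∂₂ V p + c p.2 ^ 2 * ∂₁ U p - c p.2 ^ 2 * ∂₁ V p = 0 := h2 p.1 p.2
  have hcT : HasDerivAt c (deriv c T) T := (hc.differentiable one_ne_zero T).hasDerivAt
  have hU₁x := (hU₁ (X, T)).hasDerivAt_partialFst
  have hU₁t := (hU₁ (X, T)).hasDerivAt_partialSnd
  have hU₂x := (hU₂ (X, T)).hasDerivAt_partialFst
  have hU₂t := (hU₂ (X, T)).hasDerivAt_partialSnd
  have key := compatibility_of_partial_mul_eq (D := fun p => ∂₂ U p - c p.2 ^ 2 * ∂₁ U p)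
    (N₁ := fun p => 1 - c p.2 ^ 2 * ∂₁ U p ^ 2)
    (N₂ := fun p => c p.2 ^ 2 * (1 - ∂₁ U p * ∂₂ U p)) hV
    (fun p => by linear_combination e₁ p + ∂₁ U p * e₂ p)
    (fun p => by linear_combination c p.2 ^ 2 * e₁ p + ∂₂ U p * e₂ p)
    (hU₂x.sub (hU₁x.const_mul (c T ^ 2)))
    (hU₂t.sub ((hcT.fun_pow 2).fun_mul hU₁t))
    (((hcT.fun_pow 2).fun_mul (hU₁t.fun_pow 2)).const_sub 1)
    (((hU₁x.fun_mul hU₂x).const_sub 1).const_mul (c T ^ 2))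
  rw [partialFst_partialSnd hU] at key
  simp only [partialFst, partialSnd] at key
  linear_combination key

/-- Elimination of V from the system V_X U_T − V_T U_X = 1,
V_T + c²(T)U_X − c²(T)V_X = 0 yields the scalar PDE (3.56) for U. -/
theorem stmt_10 (c : ℝ → ℝ) (hc : ContDiff ℝ 1 c)
    (U V : ℝ × ℝ → ℝ) (hU : ContDiff ℝ 2 U) (hV : ContDiff ℝ 2 V)
    (h1 : ∀ X T : ℝ, deriv (fun Y => V (Y, T)) X * deriv (fun S => U (X, S)) T
      - deriv (fun S => V (X, S)) T * deriv (fun Y => U (Y, T)) X - 1 = 0)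
    (h2 : ∀ X T : ℝ, deriv (fun S => V (X, S)) T
      + (c T) ^ 2 * deriv (fun Y => U (Y, T)) X
      - (c T) ^ 2 * deriv (fun Y => V (Y, T)) X = 0)
    (hnd : ∀ X T : ℝ, deriv (fun S => U (X, S)) T
      - (c T) ^ 2 * deriv (fun Y => U (Y, T)) X ≠ 0) :
    ∀ X T : ℝ,
      deriv (deriv (fun S => U (X, S))) T
      + (c T) ^ 2 * ((c T) ^ 2 * deriv (deriv (fun Y => U (Y, T))) X
          - deriv (deriv (fun Y => U (Y, T))) X * (deriv (fun S => U (X, S)) T) ^ 2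
          - deriv (deriv (fun S => U (X, S))) T * (deriv (fun Y => U (Y, T)) X) ^ 2
          - 2 * deriv (fun S => deriv (fun Y => U (Y, S)) X) T
          + 2 * deriv (fun S => deriv (fun Y => U (Y, S)) X) T
              * deriv (fun S => U (X, S)) T * deriv (fun Y => U (Y, T)) X)
      - 2 * c T * deriv c T * (deriv (fun Y => U (Y, T)) X
          - (deriv (fun Y => U (Y, T)) X) ^ 2 * deriv (fun S => U (X, S)) T) = 0 :=
  stmt_10_general c hc U V hU hV h1 h2
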